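/- Let 1 ≤ k ≤ n−2, 1 ≤ m ≤ n−k−1, and α ∈ [0,1). The digraph K(n,k,m) satisfies λ_α(K(n,k,m)) = [n − 2 − αm + αn + √((1−α)²n² + (6α − 2α² − 4)mn + (2−α)²m² + 4(1−α)km)] / 2. -/

import Mathlib

open scoped Classical
open Matrix

/-- Spectral radius: largest modulus of (complex) eigenvalues, i.e. roots of the
characteristic polynomial of the complexified matrix. -/
noncomputable def specRad {m : Type*} [Fintype m] [DecidableEq m] (M : Matrix m m ℝ) : ℝ :=
  sSup {r : ℝ | ∃ μ : ℂ, (M.map Complex.ofReal).charpoly.IsRoot μ ∧ r = ‖μ‖}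

/-- Irreducibility of a matrix: the associated digraph is strongly connected. -/
def Irred {n : ℕ} (M : Matrix (Fin n) (Fin n) ℝ) : Prop :=
  ∀ i j : Fin n, Relation.ReflTransGen (fun a b => M a b ≠ 0) i j

/-- Outdegree of a vertex in a digraph on `Fin n`. -/
noncomputable def outdeg {n : ℕ} (G : Fin n → Fin n → Prop) (i : Fin n) : ℕ :=
  (Finset.univ.filter (fun j => G i j)).card

/-- Indegree of a vertex. -/
noncomputable def indeg {n : ℕ} (G : Fin n → Fin n → Prop) (i : Fin n) : ℕ :=
  (Finset.univ.filter (fun j => G j i)).card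

/-- The matrix `A_α(G) = α D(G) + (1-α) A(G)`. -/
noncomputable def Aalpha {n : ℕ} (α : ℝ) (G : Fin n → Fin n → Prop) :
    Matrix (Fin n) (Fin n) ℝ :=
  α • Matrix.diagonal (fun i => (outdeg G i : ℝ)) +
    (1 - α) • (Matrix.of fun i j => if G i j then (1 : ℝ) else 0)

/-- The `A_α` spectral radius of a digraph. -/
noncomputable def lamAlpha {n : ℕ} (α : ℝ) (G : Fin n → Fin n → Prop) : ℝ :=
  specRad (Aalpha α G)

/-- Strong connectivity of a digraph. -/
def SConn {n : ℕ} (G : Fin n → Fin n → Prop) : Prop :=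
  ∀ u v : Fin n, Relation.ReflTransGen G u v

/-- Isomorphism of digraphs on `Fin n`. -/
def DIso {n : ℕ} (G H : Fin n → Fin n → Prop) : Prop :=
  ∃ e : Equiv.Perm (Fin n), ∀ u v, G u v ↔ H (e u) (e v)

/-- The directed cycle on `Fin n`. -/
def dirCycle (n : ℕ) : Fin n → Fin n → Prop :=
  fun i j => j.val = (i.val + 1) % n


/-- Deleting a set of vertices from a digraph. -/
def delVerts {n : ℕ} (G : Fin n → Fin n → Prop) (S : Finset (Fin n)) :
    Fin n → Fin n → Prop :=
  fun a b => G a b ∧ a ∉ S ∧ b ∉ S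

/-- The digraph obtained by deleting the vertices of `S` is strongly connected. -/
def SConnAvoid {n : ℕ} (G : Fin n → Fin n → Prop) (S : Finset (Fin n)) : Prop :=
  ∀ u v : Fin n, u ∉ S → v ∉ S → Relation.ReflTransGen (delVerts G S) u v

/-- The vertex connectivity of `G` equals `k`. -/
def vertexConnIs {n : ℕ} (G : Fin n → Fin n → Prop) (k : ℕ) : Prop :=
  (∃ S : Finset (Fin n), S.card = k ∧ ¬ SConnAvoid G S) ∧
    ∀ S : Finset (Fin n), ¬ SConnAvoid G S → k ≤ S.card

/-- Deleting a set of arcs from a digraph. -/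
def delArcs {n : ℕ} (G : Fin n → Fin n → Prop) (S : Finset (Fin n × Fin n)) :
    Fin n → Fin n → Prop :=
  fun a b => G a b ∧ (a, b) ∉ S

/-- The arc connectivity of `G` equals `k`. -/
def arcConnIs {n : ℕ} (G : Fin n → Fin n → Prop) (k : ℕ) : Prop :=
  (∃ S : Finset (Fin n × Fin n), S.card = k ∧ ¬ SConn (delArcs G S)) ∧
    ∀ S : Finset (Fin n × Fin n), ¬ SConn (delArcs G S) → k ≤ S.card

/-- `G` contains a directed cycle of length `g`. -/
def hasCycleLen {n : ℕ} (G : Fin n → Fin n → Prop) (g : ℕ) : Prop :=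
  ∃ c : Fin g → Fin n, Function.Injective c ∧
    ∀ i : Fin g, G (c i) (c ⟨(i.val + 1) % g, Nat.mod_lt _ i.pos⟩)

/-- The girth of `G` equals `g`. -/
def girthIs {n : ℕ} (G : Fin n → Fin n → Prop) (g : ℕ) : Prop :=
  hasCycleLen G g ∧ ∀ m, 0 < m → m < g → ¬ hasCycleLen G m

/-- The clique number of `G` equals `d`. -/
def cliqueNumIs {n : ℕ} (G : Fin n → Fin n → Prop) (d : ℕ) : Prop :=
  (∃ S : Finset (Fin n), S.card = d ∧ ∀ u ∈ S, ∀ v ∈ S, u ≠ v → G u v ∧ G v u) ∧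
    ∀ S : Finset (Fin n), (∀ u ∈ S, ∀ v ∈ S, u ≠ v → G u v ∧ G v u) → S.card ≤ d

/-- The digraph `C_{n,g}`: the directed cycle `v_1 … v_g v_1` (indices `0,…,g-1`)
together with the directed path `v_g v_{g+1} … v_n v_1`. -/
def Cng (n g : ℕ) : Fin n → Fin n → Prop := fun i j =>
  j.val = i.val + 1 ∨ (i.val = g - 1 ∧ j.val = 0) ∨ (i.val = n - 1 ∧ j.val = 0)

/-- `C'_{n,g} = C_{n,g} - {(v_n, v_1)} + {(v_n, v_g)}`. -/
def Cng' (n g : ℕ) : Fin n → Fin n → Prop := fun i j =>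
  j.val = i.val + 1 ∨ (i.val = g - 1 ∧ j.val = 0) ∨ (i.val = n - 1 ∧ j.val = g - 1)

/-- The digraph `B_{n,d}`: a complete digraph on the `d` vertices
`{0} ∪ {n-d+1, …, n-1}` together with the directed path `v_1 v_2 … v_{n-d+2}`
(indices `0, 1, …, n-d+1`). -/
def Bnd (n d : ℕ) : Fin n → Fin n → Prop := fun i j =>
  (j.val = i.val + 1 ∧ j.val ≤ n - d + 1) ∨
    (i ≠ j ∧ (i.val = 0 ∨ n - d + 1 ≤ i.val) ∧ (j.val = 0 ∨ n - d + 1 ≤ j.val))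

/-- `B'_{n,d} = B_{n,d} - {(v_{n-d+1}, v_{n-d+2})} + {(v_{n-d+1}, v_1)}`. -/
def Bnd' (n d : ℕ) : Fin n → Fin n → Prop := fun i j =>
  (j.val = i.val + 1 ∧ j.val ≤ n - d) ∨ (i.val = n - d ∧ j.val = 0) ∨
    (i ≠ j ∧ (i.val = 0 ∨ n - d + 1 ≤ i.val) ∧ (j.val = 0 ∨ n - d + 1 ≤ j.val))

/-- The digraph `K(n,k,m)`: parts `K_m` (indices `< m`), `K_k` (indices in `[m, m+k)`),
`K_{n-k-m}` (indices `≥ m+k`); all parts complete, `K_k` joined both ways to the others,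
and all one-way arcs from `K_m` to `K_{n-k-m}`. -/
def Knkm (n k m : ℕ) : Fin n → Fin n → Prop := fun i j =>
  i ≠ j ∧ ¬(m + k ≤ i.val ∧ j.val < m)

/-!
With `t = n - k - m`, the nonnegative matrix `A_α(K(n,k,m))` has a positive eigenvector: the
value `(1 - α) t` on `K_m ∪ K_k` and `x - (m + k + α t)` on `K_{n-k-m}`, where `x = λ + 1` is the
larger root of `(x - m - k - α t) (x - t - α k) = (1 - α)² k t`. For a nonnegative matrix with a
positive eigenvector `v`, every eigenvalue `μ` with eigenvector `w` satisfies `|μ| ≤ λ`: evaluate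
the eigen-equation at an index maximising `|w_i| / v_i`. So `λ` is the spectral radius.
-/

open Finset

theorem Matrix.isRoot_charpoly_iff_exists_mulVec_eq_smul {ι K : Type*} [Fintype ι]
    [DecidableEq ι] [Field K] (M : Matrix ι ι K) (μ : K) :
    M.charpoly.IsRoot μ ↔ ∃ v ≠ 0, M *ᵥ v = μ • v := by
  rw [Polynomial.IsRoot.def, eval_charpoly, ← exists_mulVec_eq_zero_iff]
  simp only [sub_mulVec, scalar_apply, ← smul_one_eq_diagonal, smul_mulVec, one_mulVec,
    sub_eq_zero, eq_comm]

section PositiveEigenvector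

variable {ι : Type*} [Fintype ι] {M : Matrix ι ι ℝ} {v : ι → ℝ} {r : ℝ}

theorem norm_eigenvalue_le_of_pos_eigenvector (hM : ∀ i j, 0 ≤ M i j) (hv : ∀ i, 0 < v i)
    (hMv : M *ᵥ v = r • v) {μ : ℂ} {w : ι → ℂ} (hw : w ≠ 0)
    (hMw : M.map Complex.ofReal *ᵥ w = μ • w) : ‖μ‖ ≤ r := by
  obtain ⟨j, hj⟩ := Function.ne_iff.mp hw
  obtain ⟨i, -, hmax⟩ := exists_max_image univ (fun j => ‖w j‖ / v j) ⟨j, mem_univ j⟩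
  set q := ‖w i‖ / v i
  have hdom : ∀ j, ‖w j‖ ≤ q * v j := fun j =>
    (div_le_iff₀ (hv j)).mp (hmax j (mem_univ j))
  have hq : 0 < q := (div_pos (norm_pos_iff.mpr hj) (hv j)).trans_le (hmax j (mem_univ j))
  have hwi : ‖w i‖ = q * v i := (div_mul_cancel₀ _ (hv i).ne').symm
  have hkey : ‖μ‖ * (q * v i) ≤ r * (q * v i) := by
    calc ‖μ‖ * (q * v i) = ‖∑ j, (M i j : ℂ) * w j‖ := by
          rw [← hwi, ← norm_mul, ← smul_eq_mul, ← Pi.smul_apply μ w i, ← hMw]; rfl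
      _ ≤ ∑ j, M i j * ‖w j‖ := by
          refine (norm_sum_le _ _).trans_eq (sum_congr rfl fun j _ => ?_)
          rw [norm_mul, Complex.norm_real, Real.norm_of_nonneg (hM i j)]
      _ ≤ ∑ j, M i j * (q * v j) := by
          gcongr with j
          · exact hM i j
          · exact hdom j
      _ = q * (M *ᵥ v) i := by
          simp only [mulVec, dotProduct, mul_sum]
          exact sum_congr rfl fun j _ => by ring
      _ = r * (q * v i) := by rw [hMv, Pi.smul_apply, smul_eq_mul]; ring
  exact le_of_mul_le_mul_right hkey (mul_pos hq (hv i))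

theorem specRad_eq_of_pos_eigenvector [DecidableEq ι] [Nonempty ι] (hM : ∀ i j, 0 ≤ M i j)
    (hv : ∀ i, 0 < v i) (hMv : M *ᵥ v = r • v) : specRad M = r := by
  have hbound : ∀ μ : ℂ, (M.map Complex.ofReal).charpoly.IsRoot μ → ‖μ‖ ≤ r := by
    intro μ hμ
    obtain ⟨w, hw, hMw⟩ := (isRoot_charpoly_iff_exists_mulVec_eq_smul _ μ).mp hμ
    exact norm_eigenvalue_le_of_pos_eigenvector hM hv hMv hw hMw
  have hroot : (M.map Complex.ofReal).charpoly.IsRoot (r : ℂ) := by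
    refine (isRoot_charpoly_iff_exists_mulVec_eq_smul _ _).mpr ⟨Complex.ofReal ∘ v, ?_, ?_⟩
    · obtain ⟨i⟩ := ‹Nonempty ι›
      exact Function.ne_iff.mpr ⟨i, by simpa using (hv i).ne'⟩
    · ext i
      have := congrArg Complex.ofReal (congrFun hMv i)
      simpa [mulVec, dotProduct] using this
  have hr : r = ‖(r : ℂ)‖ := by
    rw [Complex.norm_real, Real.norm_of_nonneg ((norm_nonneg _).trans (hbound _ hroot))]
  exact IsGreatest.csSup_eq ⟨⟨r, hroot, hr⟩, fun _ ⟨μ, hμ, hμr⟩ => hμr ▸ hbound μ hμ⟩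

end PositiveEigenvector

section Digraph

variable {n : ℕ}

theorem Aalpha_mulVec_apply (α : ℝ) (G : Fin n → Fin n → Prop) (v : Fin n → ℝ) (i : Fin n) :
    (Aalpha α G *ᵥ v) i = α * outdeg G i * v i + (1 - α) * ∑ j ∈ univ.filter (G i), v j := by
  rw [Aalpha, add_mulVec, smul_mulVec, smul_mulVec, Pi.add_apply, Pi.smul_apply, Pi.smul_apply,
    mulVec_diagonal, sum_filter]
  simp only [mulVec, dotProduct, of_apply, ite_mul, one_mul, zero_mul, smul_eq_mul]
  ring

theorem Aalpha_nonneg {α : ℝ} (hα0 : 0 ≤ α) (hα1 : α ≤ 1) (G : Fin n → Fin n → Prop)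
    (i j : Fin n) : 0 ≤ Aalpha α G i j := by
  simp only [Aalpha, Matrix.add_apply, Matrix.smul_apply, diagonal_apply, of_apply, smul_eq_mul]
  have : 0 ≤ 1 - α := sub_nonneg.mpr hα1
  split_ifs <;> positivity

end Digraph

def stepVec {n : ℕ} (p : ℕ) (x y : ℝ) : Fin n → ℝ := fun j => if (j : ℕ) < p then x else y

section Knkm

variable {k m t : ℕ}

theorem sum_filter_Knkm_stepVec (x y : ℝ) (i : Fin (m + k + t)) :
    ∑ j ∈ univ.filter (Knkm (m + k + t) k m i), stepVec (m + k) x y j =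
      (if m + k ≤ (i : ℕ) then (k : ℝ) else m + k) * x + t * y - stepVec (m + k) x y i := by
  have hfilter : univ.filter (Knkm (m + k + t) k m i) =
      (univ.filter fun j : Fin (m + k + t) => ¬(m + k ≤ (i : ℕ) ∧ (j : ℕ) < m)).erase i := by
    ext j
    simp only [Knkm, mem_filter, mem_erase, mem_univ, true_and, ne_comm]
  have hi : i ∈ univ.filter fun j : Fin (m + k + t) => ¬(m + k ≤ (i : ℕ) ∧ (j : ℕ) < m) := by
    simp only [mem_filter, mem_univ, true_and]; omega
  rw [hfilter, sum_erase_eq_sub hi, sum_filter]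
  congr 1
  simp only [stepVec]
  rw [Fin.sum_univ_eq_sum_range
    (fun j => if ¬(m + k ≤ (i : ℕ) ∧ j < m) then (if j < m + k then x else y) else 0),
    sum_range_add, sum_range_add]
  have sum_range_const (r : ℕ) (g : ℕ → ℝ) (c : ℝ) (hg : ∀ j < r, g j = c) :
      ∑ j ∈ range r, g j = r * c := by
    rw [sum_eq_card_nsmul fun j hj => hg j (mem_range.mp hj), card_range, nsmul_eq_mul]
  rw [sum_range_const m _ (if m + k ≤ (i : ℕ) then 0 else x), sum_range_const k _ x,
    sum_range_const t _ y]
  · split_ifs <;> ring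
  all_goals intro j hj; split_ifs <;> first | rfl | omega

theorem outdeg_Knkm (i : Fin (m + k + t)) :
    (outdeg (Knkm (m + k + t) k m) i : ℝ) =
      (if m + k ≤ (i : ℕ) then (k : ℝ) else m + k) + t - 1 := by
  have h := sum_filter_Knkm_stepVec (k := k) (t := t) 1 1 i
  simp only [stepVec, ite_self, sum_const, nsmul_eq_mul, mul_one] at h
  rw [outdeg, ← h]

theorem Aalpha_Knkm_mulVec_stepVec {α r : ℝ}
    (hr : (r + 1 - (m + k + α * t)) * (r + 1 - (t + α * k)) = (1 - α) ^ 2 * k * t) :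
    Aalpha α (Knkm (m + k + t) k m) *ᵥ stepVec (m + k) ((1 - α) * t) (r + 1 - (m + k + α * t)) =
      r • stepVec (m + k) ((1 - α) * t) (r + 1 - (m + k + α * t)) := by
  ext i
  rw [Aalpha_mulVec_apply, outdeg_Knkm, sum_filter_Knkm_stepVec, Pi.smul_apply, smul_eq_mul]
  by_cases hi : m + k ≤ (i : ℕ)
  · simp only [hi, if_true, stepVec, not_lt.mpr hi, if_false]
    linear_combination -hr
  · simp only [hi, if_false, stepVec, not_le.mp hi, if_true]
    ring

theorem lamAlpha_Knkm {α : ℝ} (hα0 : 0 ≤ α) (hα1 : α < 1) (hk : 1 ≤ k) (ht : 1 ≤ t) :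
    lamAlpha α (Knkm (m + k + t) k m) =
      ((m + k + α * t) + (t + α * k) +
        Real.sqrt (((m + k + α * t) - (t + α * k)) ^ 2 + 4 * (1 - α) ^ 2 * k * t)) / 2 - 1 := by
  set P : ℝ := m + k + α * t
  set Q : ℝ := t + α * k
  set s := Real.sqrt ((P - Q) ^ 2 + 4 * (1 - α) ^ 2 * k * t)
  have hα' : 0 < 1 - α := sub_pos.mpr hα1
  have hk' : (0 : ℝ) < k := by exact_mod_cast hk
  have ht' : (0 : ℝ) < t := by exact_mod_cast ht
  have hkt : 0 < (1 - α) ^ 2 * k * t := by positivity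
  have hs : s ^ 2 = (P - Q) ^ 2 + 4 * (1 - α) ^ 2 * k * t := Real.sq_sqrt (by positivity)
  have hPQs : P - Q < s := by nlinarith [Real.sqrt_nonneg ((P - Q) ^ 2 + 4 * (1 - α) ^ 2 * k * t)]
  have : Nonempty (Fin (m + k + t)) := ⟨⟨0, by omega⟩⟩
  refine specRad_eq_of_pos_eigenvector (Aalpha_nonneg hα0 hα1.le _) (fun j => ?_)
    (Aalpha_Knkm_mulVec_stepVec ?_)
  · unfold stepVec
    split_ifs
    · exact mul_pos hα' ht'
    · linarith
  · linear_combination hs / 4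

end Knkm

theorem stmt14_general {n k m : ℕ} (hk1 : 1 ≤ k) (hk2 : k ≤ n - 2)
    (hm2 : m ≤ n - k - 1)
    (α : ℝ) (hα0 : 0 ≤ α) (hα1 : α < 1) :
    lamAlpha α (Knkm n k m) =
      ((n : ℝ) - 2 - α * m + α * n +
        Real.sqrt ((1 - α) ^ 2 * (n : ℝ) ^ 2 + (6 * α - 2 * α ^ 2 - 4) * m * n +
          (2 - α) ^ 2 * (m : ℝ) ^ 2 + 4 * (1 - α) * k * m)) / 2 := by
  obtain ⟨t, rfl⟩ : ∃ t, n = m + k + t := ⟨n - (m + k), by omega⟩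
  rw [lamAlpha_Knkm hα0 hα1 hk1 (by omega)]
  push_cast
  ring_nf

/-- closed formula for `λ_α(K(n,k,m))`. -/
theorem stmt14 {n k m : ℕ} (hk1 : 1 ≤ k) (hk2 : k ≤ n - 2)
    (hm1 : 1 ≤ m) (hm2 : m ≤ n - k - 1)
    (α : ℝ) (hα0 : 0 ≤ α) (hα1 : α < 1) :
    lamAlpha α (Knkm n k m) =
      ((n : ℝ) - 2 - α * m + α * n +
        Real.sqrt ((1 - α) ^ 2 * (n : ℝ) ^ 2 + (6 * α - 2 * α ^ 2 - 4) * m * n +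
          (2 - α) ^ 2 * (m : ℝ) ^ 2 + 4 * (1 - α) * k * m)) / 2 :=
  stmt14_general hk1 hk2 hm2 α hα0 hα1
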